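/- arXiv:1411.2063 — 2 statements merged into one kernel-verified Lean document; each statement's English description precedes it below -/
import Mathlib

section
/- Every C³ entropy of the 2d compressible potential flow system (i.e., every η(ρ,v,w) satisfying all compatibility relations: π'η_{vv} = ρη_{ρρ}, π'η_{ww} = ρη_{ρρ}, η_{vw} = 0, ρη_{ρw} = w·η_{vv}, ρη_{ρv} = v·η_{ww}) is of the form η = C⁰ + C^ρ·ρ + C^v·v + C^w·w + C^E·E(ρ,v,w), where E(ρ,v,w) = ∫^ρ π(r) dr + ρ(v²+w²)/2 and C⁰, C^ρ, C^v, C^w, C^E are constants. -/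
/-!
Since `π' > 0`, the first two relations give `η_vv = η_ww =: A`. Differentiating
`ρ η_ρw = w A` in `w` and in `v`, and using `η_vw = 0`, yields `ρ A_ρ = A` and `w A_v = 0`,
while `A_w = ∂_v η_vw = 0`; hence `A = C^E ρ` on the half-space `ρ > 0`. The remaining relations
then say that the Hessian of `η` is `C^E` times the Hessian of `E`, and integrating twice on the
convex half-space shows that `η - C^E E` is affine.
-/

/-- Partial derivative in `ρ`. -/
noncomputable def d1 (f : ℝ × ℝ × ℝ → ℝ) (p : ℝ × ℝ × ℝ) : ℝ := fderiv ℝ f p (1, 0, 0)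

/-- Partial derivative in `v`. -/
noncomputable def d2 (f : ℝ × ℝ × ℝ → ℝ) (p : ℝ × ℝ × ℝ) : ℝ := fderiv ℝ f p (0, 1, 0)

/-- Partial derivative in `w`. -/
noncomputable def d3 (f : ℝ × ℝ × ℝ → ℝ) (p : ℝ × ℝ × ℝ) : ℝ := fderiv ℝ f p (0, 0, 1)

section Partials

variable {f g : ℝ × ℝ × ℝ → ℝ} {ρ v w : ℝ}

theorem hasDerivAt_d1 (hf : DifferentiableAt ℝ f (ρ, v, w)) :
    HasDerivAt (fun t => f (t, v, w)) (d1 f (ρ, v, w)) ρ :=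
  hf.hasFDerivAt.comp_hasDerivAt ρ
    ((hasDerivAt_id ρ).prodMk ((hasDerivAt_const ρ v).prodMk (hasDerivAt_const ρ w)))

theorem hasDerivAt_d2 (hf : DifferentiableAt ℝ f (ρ, v, w)) :
    HasDerivAt (fun t => f (ρ, t, w)) (d2 f (ρ, v, w)) v :=
  hf.hasFDerivAt.comp_hasDerivAt v
    ((hasDerivAt_const v ρ).prodMk ((hasDerivAt_id v).prodMk (hasDerivAt_const v w)))

theorem hasDerivAt_d3 (hf : DifferentiableAt ℝ f (ρ, v, w)) :
    HasDerivAt (fun t => f (ρ, v, t)) (d3 f (ρ, v, w)) w :=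
  hf.hasFDerivAt.comp_hasDerivAt w
    ((hasDerivAt_const w ρ).prodMk ((hasDerivAt_const w v).prodMk (hasDerivAt_id w)))

theorem d1_eq_deriv (hf : DifferentiableAt ℝ f (ρ, v, w)) :
    d1 f (ρ, v, w) = deriv (fun t => f (t, v, w)) ρ :=
  (hasDerivAt_d1 hf).deriv.symm

theorem d2_eq_deriv (hf : DifferentiableAt ℝ f (ρ, v, w)) :
    d2 f (ρ, v, w) = deriv (fun t => f (ρ, t, w)) v :=
  (hasDerivAt_d2 hf).deriv.symm

theorem d3_eq_deriv (hf : DifferentiableAt ℝ f (ρ, v, w)) :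
    d3 f (ρ, v, w) = deriv (fun t => f (ρ, v, t)) w :=
  (hasDerivAt_d3 hf).deriv.symm

theorem fderiv_apply_eq_partials (f : ℝ × ℝ × ℝ → ℝ) (p : ℝ × ℝ × ℝ) (a b c : ℝ) :
    fderiv ℝ f p (a, b, c) = a * d1 f p + b * d2 f p + c * d3 f p := by
  have hdecomp : ((a, b, c) : ℝ × ℝ × ℝ) = a • (1, 0, 0) + b • (0, 1, 0) + c • (0, 0, 1) := by
    simp
  rw [hdecomp, map_add, map_add, map_smul, map_smul, map_smul]
  rfl

theorem ContDiff.d1 {m n : WithTop ℕ∞} (hf : ContDiff ℝ n f) (hmn : m + 1 ≤ n) :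
    ContDiff ℝ m (d1 f) :=
  (hf.fderiv_right hmn).clm_apply contDiff_const

theorem ContDiff.d2 {m n : WithTop ℕ∞} (hf : ContDiff ℝ n f) (hmn : m + 1 ≤ n) :
    ContDiff ℝ m (d2 f) :=
  (hf.fderiv_right hmn).clm_apply contDiff_const

theorem ContDiff.d3 {m n : WithTop ℕ∞} (hf : ContDiff ℝ n f) (hmn : m + 1 ≤ n) :
    ContDiff ℝ m (d3 f) :=
  (hf.fderiv_right hmn).clm_apply contDiff_const

theorem fderiv_fderiv_apply_comm (hf : ContDiff ℝ 2 f) (p u u' : ℝ × ℝ × ℝ) :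
    fderiv ℝ (fun q => fderiv ℝ f q u) p u' = fderiv ℝ (fun q => fderiv ℝ f q u') p u := by
  have hdf : DifferentiableAt ℝ (fderiv ℝ f) p :=
    (hf.fderiv_right (m := 1) (by norm_num)).differentiable one_ne_zero p
  rw [fderiv_clm_apply hdf (differentiableAt_const u),
    fderiv_clm_apply hdf (differentiableAt_const u')]
  simpa using hf.contDiffAt.isSymmSndFDerivAt (by simp) u' u

theorem d1_d2_comm (hf : ContDiff ℝ 2 f) : d1 (d2 f) = d2 (d1 f) :=
  funext fun p => fderiv_fderiv_apply_comm hf p _ _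

theorem d1_d3_comm (hf : ContDiff ℝ 2 f) : d1 (d3 f) = d3 (d1 f) :=
  funext fun p => fderiv_fderiv_apply_comm hf p _ _

theorem d2_d3_comm (hf : ContDiff ℝ 2 f) : d2 (d3 f) = d3 (d2 f) :=
  funext fun p => fderiv_fderiv_apply_comm hf p _ _

theorem fderiv_eq_of_eq_of_pos (h : ∀ ρ, 0 < ρ → ∀ v w, f (ρ, v, w) = g (ρ, v, w)) (hρ : 0 < ρ) :
    fderiv ℝ f (ρ, v, w) = fderiv ℝ g (ρ, v, w) := by
  refine Filter.EventuallyEq.fderiv_eq ?_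
  have hopen : IsOpen {p : ℝ × ℝ × ℝ | 0 < p.1} := isOpen_lt continuous_const continuous_fst
  filter_upwards [hopen.mem_nhds (show (0 : ℝ) < (ρ, v, w).1 from hρ)]
    with q hq using h q.1 hq q.2.1 q.2.2

theorem fderiv_apply_eq_zero_of_pos (h : ∀ ρ, 0 < ρ → ∀ v w, f (ρ, v, w) = 0) (hρ : 0 < ρ)
    (u : ℝ × ℝ × ℝ) : fderiv ℝ f (ρ, v, w) u = 0 := by
  rw [fderiv_eq_of_eq_of_pos (g := fun _ => 0) h hρ, fderiv_const_apply, zero_apply]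

theorem exists_eq_const_of_partials_eq_zero
    (hf : ∀ ρ, 0 < ρ → ∀ v w, DifferentiableAt ℝ f (ρ, v, w))
    (h1 : ∀ ρ, 0 < ρ → ∀ v w, d1 f (ρ, v, w) = 0) (h2 : ∀ ρ, 0 < ρ → ∀ v w, d2 f (ρ, v, w) = 0)
    (h3 : ∀ ρ, 0 < ρ → ∀ v w, d3 f (ρ, v, w) = 0) :
    ∃ C, ∀ ρ, 0 < ρ → ∀ v w, f (ρ, v, w) = C := by
  have hconvex : Convex ℝ {p : ℝ × ℝ × ℝ | 0 < p.1} :=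
    convex_halfSpace_gt (LinearMap.fst ℝ ℝ (ℝ × ℝ)).isLinear 0
  obtain ⟨C, hC⟩ := (isOpen_lt continuous_const continuous_fst).exists_is_const_of_fderiv_eq_zero
    hconvex.isPreconnected (fun p hp => (hf p.1 hp p.2.1 p.2.2).differentiableWithinAt)
    (fun p hp => ContinuousLinearMap.ext fun ⟨a, b, c⟩ => by
      simp [fderiv_apply_eq_partials, h1 p.1 hp p.2.1 p.2.2, h2 p.1 hp p.2.1 p.2.2,
        h3 p.1 hp p.2.1 p.2.2])
  exact ⟨C, fun ρ hρ v w => hC (ρ, v, w) hρ⟩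

theorem exists_eq_add_const_of_partials_eq (hf : Differentiable ℝ f) (hg : Differentiable ℝ g)
    (h1 : ∀ ρ, 0 < ρ → ∀ v w, d1 f (ρ, v, w) = d1 g (ρ, v, w))
    (h2 : ∀ ρ, 0 < ρ → ∀ v w, d2 f (ρ, v, w) = d2 g (ρ, v, w))
    (h3 : ∀ ρ, 0 < ρ → ∀ v w, d3 f (ρ, v, w) = d3 g (ρ, v, w)) :
    ∃ C, ∀ ρ, 0 < ρ → ∀ v w, f (ρ, v, w) = g (ρ, v, w) + C := by
  have hsub (u p) : fderiv ℝ (f - g) p u = fderiv ℝ f p u - fderiv ℝ g p u := by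
    rw [fderiv_sub (hf p) (hg p)]; rfl
  obtain ⟨C, hC⟩ := exists_eq_const_of_partials_eq_zero (f := f - g)
    (fun ρ _ v w => (hf _).sub (hg _))
    (fun ρ hρ v w => by rw [d1, hsub, sub_eq_zero]; exact h1 ρ hρ v w)
    (fun ρ hρ v w => by rw [d2, hsub, sub_eq_zero]; exact h2 ρ hρ v w)
    (fun ρ hρ v w => by rw [d3, hsub, sub_eq_zero]; exact h3 ρ hρ v w)
  exact ⟨C, fun ρ hρ v w => by rw [← hC ρ hρ v w, Pi.sub_apply]; ring⟩

end Partials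

theorem exists_eq_mul_fst_of_partials {A : ℝ × ℝ × ℝ → ℝ} (hA : Differentiable ℝ A)
    (hρ : ∀ ρ, 0 < ρ → ∀ v w, ρ * d1 A (ρ, v, w) = A (ρ, v, w))
    (hv : ∀ ρ, 0 < ρ → ∀ v w, d2 A (ρ, v, w) = 0) (hw : ∀ ρ, 0 < ρ → ∀ v w, d3 A (ρ, v, w) = 0) :
    ∃ C, ∀ ρ, 0 < ρ → ∀ v w, A (ρ, v, w) = C * ρ := by
  have hdiff (ρ v w : ℝ) (hρ : 0 < ρ) : DifferentiableAt ℝ (fun p => A p / p.1) (ρ, v, w) := by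
    fun_prop (disch := exact hρ.ne')
  obtain ⟨C, hC⟩ := exists_eq_const_of_partials_eq_zero (f := fun p => A p / p.1)
    (fun ρ hρ v w => hdiff ρ v w hρ)
    (fun ρ hρ' v w => by
      rw [(hasDerivAt_d1 (hdiff ρ v w hρ')).unique
          ((hasDerivAt_d1 (hA _)).div (hasDerivAt_id ρ) hρ'.ne'),
        mul_comm, hρ ρ hρ' v w, mul_one, sub_self, zero_div])
    (fun ρ hρ' v w => by
      rw [(hasDerivAt_d2 (hdiff ρ v w hρ')).unique ((hasDerivAt_d2 (hA _)).div_const ρ),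
        hv ρ hρ' v w, zero_div])
    (fun ρ hρ' v w => by
      rw [(hasDerivAt_d3 (hdiff ρ v w hρ')).unique ((hasDerivAt_d3 (hA _)).div_const ρ),
        hw ρ hρ' v w, zero_div])
  exact ⟨C, fun ρ hρ' v w => by rw [← hC ρ hρ' v w, div_mul_cancel₀ _ hρ'.ne']⟩

section Entropy

variable {η : ℝ × ℝ × ℝ → ℝ}

theorem d3_d2_d2_eq_zero (hη : ContDiff ℝ 3 η)
    (hvw : ∀ ρ, 0 < ρ → ∀ v w, d3 (d2 η) (ρ, v, w) = 0) :
    ∀ ρ, 0 < ρ → ∀ v w, d3 (d2 (d2 η)) (ρ, v, w) = 0 := by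
  intro ρ hρ v w
  rw [← d2_d3_comm (hη.d2 (by norm_num))]
  exact fderiv_apply_eq_zero_of_pos hvw hρ _

theorem mul_d1_d2_d2_eq (hη : ContDiff ℝ 3 η)
    (hvw : ∀ ρ, 0 < ρ → ∀ v w, d3 (d2 η) (ρ, v, w) = 0)
    (hvv : ∀ ρ, 0 < ρ → ∀ v w, d2 (d2 η) (ρ, v, w) = d3 (d3 η) (ρ, v, w))
    (hρw : ∀ ρ, 0 < ρ → ∀ v w, ρ * d3 (d1 η) (ρ, v, w) = w * d2 (d2 η) (ρ, v, w)) :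
    ∀ ρ, 0 < ρ → ∀ v w, ρ * d1 (d2 (d2 η)) (ρ, v, w) = d2 (d2 η) (ρ, v, w) := by
  intro ρ hρ v w
  have hη2 : ContDiff ℝ 2 η := hη.of_le (by norm_num)
  have hρww : d3 (d3 (d1 η)) (ρ, v, w) = d1 (d2 (d2 η)) (ρ, v, w) := by
    rw [← d1_d3_comm hη2, ← d1_d3_comm (hη.d3 (by norm_num))]
    exact congrArg (· (1, 0, 0)) (fderiv_eq_of_eq_of_pos (fun ρ hρ v w => (hvv ρ hρ v w).symm) hρ)
  -- differentiate `hρw` in `w`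
  have hlhs : HasDerivAt (fun t => ρ * d3 (d1 η) (ρ, v, t)) (ρ * d3 (d3 (d1 η)) (ρ, v, w)) w :=
    (hasDerivAt_d3 (((hη.d1 (m := 2) (by norm_num)).d3 (m := 1) (by norm_num)).differentiable
      one_ne_zero _)).const_mul ρ
  have hrhs : HasDerivAt (fun t => t * d2 (d2 η) (ρ, v, t))
      (1 * d2 (d2 η) (ρ, v, w) + w * d3 (d2 (d2 η)) (ρ, v, w)) w :=
    (hasDerivAt_id w).mul (hasDerivAt_d3 ((((hη.d2 (m := 2) (by norm_num)).d2 (m := 1)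
      (by norm_num)).differentiable one_ne_zero _)))
  rw [funext (hρw ρ hρ v ·)] at hlhs
  have := hlhs.unique hrhs
  rw [hρww, d3_d2_d2_eq_zero hη hvw ρ hρ v w] at this
  linarith

theorem d2_d2_d2_eq_zero (hη : ContDiff ℝ 3 η)
    (hvw : ∀ ρ, 0 < ρ → ∀ v w, d3 (d2 η) (ρ, v, w) = 0)
    (hρw : ∀ ρ, 0 < ρ → ∀ v w, ρ * d3 (d1 η) (ρ, v, w) = w * d2 (d2 η) (ρ, v, w)) :
    ∀ ρ, 0 < ρ → ∀ v w, d2 (d2 (d2 η)) (ρ, v, w) = 0 := by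
  intro ρ hρ v
  have hη2 : ContDiff ℝ 2 η := hη.of_le (by norm_num)
  have hρvw (t : ℝ) : d2 (d3 (d1 η)) (ρ, v, t) = 0 := by
    rw [← d1_d3_comm hη2, ← d1_d2_comm (hη.d3 (by norm_num)), d2_d3_comm hη2]
    exact fderiv_apply_eq_zero_of_pos hvw hρ _
  -- differentiate `hρw` in `v`
  have hmul (t : ℝ) : t * d2 (d2 (d2 η)) (ρ, v, t) = 0 := by
    have hlhs : HasDerivAt (fun s => ρ * d3 (d1 η) (ρ, s, t)) (ρ * d2 (d3 (d1 η)) (ρ, v, t)) v :=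
      (hasDerivAt_d2 (((hη.d1 (m := 2) (by norm_num)).d3 (m := 1) (by norm_num)).differentiable
        one_ne_zero _)).const_mul ρ
    have hrhs : HasDerivAt (fun s => t * d2 (d2 η) (ρ, s, t)) (t * d2 (d2 (d2 η)) (ρ, v, t)) v :=
      (hasDerivAt_d2 ((((hη.d2 (m := 2) (by norm_num)).d2 (m := 1) (by norm_num)).differentiable
        one_ne_zero _))).const_mul t
    rw [funext (hρw ρ hρ · t)] at hlhs
    rw [← hlhs.unique hrhs, hρvw, mul_zero]
  have hcont : Continuous fun t => d2 (d2 (d2 η)) (ρ, v, t) :=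
    ((((hη.d2 (m := 2) (by norm_num)).d2 (m := 1) (by norm_num)).d2 (m := 0)
      (by norm_num)).continuous).comp (by fun_prop)
  exact congrFun (Continuous.ext_on (dense_compl_singleton 0) hcont continuous_const
    fun t ht => (mul_eq_zero.1 (hmul t)).resolve_left ht)

theorem exists_d2_d2_eq_mul_fst (hη : ContDiff ℝ 3 η)
    (hvw : ∀ ρ, 0 < ρ → ∀ v w, d3 (d2 η) (ρ, v, w) = 0)
    (hvv : ∀ ρ, 0 < ρ → ∀ v w, d2 (d2 η) (ρ, v, w) = d3 (d3 η) (ρ, v, w))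
    (hρw : ∀ ρ, 0 < ρ → ∀ v w, ρ * d3 (d1 η) (ρ, v, w) = w * d2 (d2 η) (ρ, v, w)) :
    ∃ C, ∀ ρ, 0 < ρ → ∀ v w, d2 (d2 η) (ρ, v, w) = C * ρ :=
  exists_eq_mul_fst_of_partials
    (((hη.d2 (m := 2) (by norm_num)).d2 (m := 1) (by norm_num)).differentiable one_ne_zero)
    (mul_d1_d2_d2_eq hη hvw hvv hρw) (d2_d2_d2_eq_zero hη hvw hρw) (d3_d2_d2_eq_zero hη hvw)

end Entropy

section Integration

variable {η : ℝ × ℝ × ℝ → ℝ} {pen : ℝ → ℝ} {CE : ℝ}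

theorem exists_partials_eq_of_hessian (hη : ContDiff ℝ 2 η) (hpen : Differentiable ℝ pen)
    (hρρ : ∀ ρ, 0 < ρ → ∀ v w, d1 (d1 η) (ρ, v, w) = CE * deriv pen ρ)
    (hρv : ∀ ρ, 0 < ρ → ∀ v w, d2 (d1 η) (ρ, v, w) = CE * v)
    (hρw : ∀ ρ, 0 < ρ → ∀ v w, d3 (d1 η) (ρ, v, w) = CE * w)
    (hvv : ∀ ρ, 0 < ρ → ∀ v w, d2 (d2 η) (ρ, v, w) = CE * ρ)
    (hvw : ∀ ρ, 0 < ρ → ∀ v w, d3 (d2 η) (ρ, v, w) = 0)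
    (hww : ∀ ρ, 0 < ρ → ∀ v w, d3 (d3 η) (ρ, v, w) = CE * ρ) :
    ∃ Cρ Cv Cw, ∀ ρ, 0 < ρ → ∀ v w,
      d1 η (ρ, v, w) = CE * (pen ρ + (v ^ 2 + w ^ 2) / 2) + Cρ ∧
      d2 η (ρ, v, w) = CE * ρ * v + Cv ∧ d3 η (ρ, v, w) = CE * ρ * w + Cw := by
  obtain ⟨Cρ, hCρ⟩ := exists_eq_add_const_of_partials_eq
    ((hη.d1 (m := 1) (by norm_num)).differentiable one_ne_zero)
    (g := fun p => CE * (pen p.1 + (p.2.1 ^ 2 + p.2.2 ^ 2) / 2)) (by fun_prop)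
    (fun ρ hρ v w => by rw [hρρ ρ hρ v w, d1_eq_deriv (by fun_prop)]; simp)
    (fun ρ hρ v w => by rw [hρv ρ hρ v w, d2_eq_deriv (by fun_prop)]; simp)
    (fun ρ hρ v w => by rw [hρw ρ hρ v w, d3_eq_deriv (by fun_prop)]; simp)
  obtain ⟨Cv, hCv⟩ := exists_eq_add_const_of_partials_eq
    ((hη.d2 (m := 1) (by norm_num)).differentiable one_ne_zero)
    (g := fun p => CE * p.1 * p.2.1) (by fun_prop)
    (fun ρ hρ v w => by rw [d1_d2_comm hη, hρv ρ hρ v w, d1_eq_deriv (by fun_prop)]; simp)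
    (fun ρ hρ v w => by rw [hvv ρ hρ v w, d2_eq_deriv (by fun_prop)]; simp)
    (fun ρ hρ v w => by rw [hvw ρ hρ v w, d3_eq_deriv (by fun_prop)]; simp)
  obtain ⟨Cw, hCw⟩ := exists_eq_add_const_of_partials_eq
    ((hη.d3 (m := 1) (by norm_num)).differentiable one_ne_zero)
    (g := fun p => CE * p.1 * p.2.2) (by fun_prop)
    (fun ρ hρ v w => by rw [d1_d3_comm hη, hρw ρ hρ v w, d1_eq_deriv (by fun_prop)]; simp)
    (fun ρ hρ v w => by rw [d2_d3_comm hη, hvw ρ hρ v w, d2_eq_deriv (by fun_prop)]; simp)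
    (fun ρ hρ v w => by rw [hww ρ hρ v w, d3_eq_deriv (by fun_prop)]; simp)
  exact ⟨Cρ, Cv, Cw, fun ρ hρ v w => ⟨hCρ ρ hρ v w, hCv ρ hρ v w, hCw ρ hρ v w⟩⟩

theorem exists_eq_energy_of_partials {Cρ Cv Cw : ℝ} (hη : Differentiable ℝ η)
    (hpen : Continuous pen)
    (h1 : ∀ ρ, 0 < ρ → ∀ v w, d1 η (ρ, v, w) = CE * (pen ρ + (v ^ 2 + w ^ 2) / 2) + Cρ)
    (h2 : ∀ ρ, 0 < ρ → ∀ v w, d2 η (ρ, v, w) = CE * ρ * v + Cv)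
    (h3 : ∀ ρ, 0 < ρ → ∀ v w, d3 η (ρ, v, w) = CE * ρ * w + Cw) :
    ∃ C0, ∀ ρ, 0 < ρ → ∀ v w, η (ρ, v, w) = C0 + Cρ * ρ + Cv * v + Cw * w
      + CE * ((∫ r in (1:ℝ)..ρ, pen r) + ρ * (v ^ 2 + w ^ 2) / 2) := by
  have hprim (x : ℝ) : HasDerivAt (fun x => ∫ r in (1:ℝ)..x, pen r) (pen x) x :=
    (hpen.integral_hasStrictDerivAt 1 x).hasDerivAt
  have hprim_diff : Differentiable ℝ (fun x => ∫ r in (1:ℝ)..x, pen r) :=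
    fun x => (hprim x).differentiableAt
  have hprim_deriv : deriv (fun x => ∫ r in (1:ℝ)..x, pen r) = pen :=
    funext fun x => (hprim x).deriv
  obtain ⟨C0, hC0⟩ := exists_eq_add_const_of_partials_eq hη
    (g := fun p => Cρ * p.1 + Cv * p.2.1 + Cw * p.2.2
      + CE * ((∫ r in (1:ℝ)..p.1, pen r) + p.1 * (p.2.1 ^ 2 + p.2.2 ^ 2) / 2)) (by fun_prop)
    (fun ρ hρ v w => by
      rw [h1 ρ hρ v w, d1_eq_deriv (by fun_prop)]
      simp (disch := fun_prop) only [deriv_fun_add, deriv_const_mul_id', deriv_fun_mul,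
        deriv_const', deriv_div_const, deriv_id'', deriv_fun_pow, hprim_deriv]
      ring)
    (fun ρ hρ v w => by
      rw [h2 ρ hρ v w, d2_eq_deriv (by fun_prop)]
      simp (disch := fun_prop) only [deriv_fun_add, deriv_const_mul_id', deriv_fun_mul,
        deriv_const', deriv_div_const, deriv_id'', deriv_fun_pow]
      ring)
    (fun ρ hρ v w => by
      rw [h3 ρ hρ v w, d3_eq_deriv (by fun_prop)]
      simp (disch := fun_prop) only [deriv_fun_add, deriv_const_mul_id', deriv_fun_mul,
        deriv_const', deriv_div_const, deriv_id'', deriv_fun_pow]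
      ring)
  exact ⟨C0, fun ρ hρ v w => by rw [hC0 ρ hρ v w]; ring⟩

end Integration

/-- Every C³ entropy of the 2d compressible potential flow system, i.e. every `η(ρ,v,w)`
satisfying `π' η_vv = ρ η_ρρ`, `π' η_ww = ρ η_ρρ`, `η_vw = 0`, `ρ η_ρw = w η_vv`,
`ρ η_ρv = v η_ww` (with enthalpy `pen = π`, `π' > 0`), is of the form
`η = C⁰ + C^ρ ρ + C^v v + C^w w + C^E E` with `E = ∫^ρ π + ρ(v²+w²)/2`. -/
theorem stmt_13 (η : ℝ × ℝ × ℝ → ℝ) (pen : ℝ → ℝ)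
    (hη : ContDiff ℝ 3 η) (hpen : ContDiff ℝ 1 pen)
    (hpen' : ∀ ρ : ℝ, 0 < ρ → 0 < deriv pen ρ)
    (h1 : ∀ ρ : ℝ, 0 < ρ → ∀ v w : ℝ,
      deriv pen ρ * d2 (d2 η) (ρ, v, w) = ρ * d1 (d1 η) (ρ, v, w))
    (h2 : ∀ ρ : ℝ, 0 < ρ → ∀ v w : ℝ,
      deriv pen ρ * d3 (d3 η) (ρ, v, w) = ρ * d1 (d1 η) (ρ, v, w))
    (h3 : ∀ ρ : ℝ, 0 < ρ → ∀ v w : ℝ, d3 (d2 η) (ρ, v, w) = 0)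
    (h4 : ∀ ρ : ℝ, 0 < ρ → ∀ v w : ℝ,
      ρ * d3 (d1 η) (ρ, v, w) = w * d2 (d2 η) (ρ, v, w))
    (h5 : ∀ ρ : ℝ, 0 < ρ → ∀ v w : ℝ,
      ρ * d2 (d1 η) (ρ, v, w) = v * d3 (d3 η) (ρ, v, w)) :
    ∃ C0 Cρ Cv Cw CE : ℝ, ∀ ρ : ℝ, 0 < ρ → ∀ v w : ℝ,
      η (ρ, v, w) = C0 + Cρ * ρ + Cv * v + Cw * w
        + CE * ((∫ r in (1:ℝ)..ρ, pen r) + ρ * (v ^ 2 + w ^ 2) / 2) := by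
  have hvv_ww (ρ : ℝ) (hρ : 0 < ρ) (v w : ℝ) : d2 (d2 η) (ρ, v, w) = d3 (d3 η) (ρ, v, w) :=
    mul_left_cancel₀ (hpen' ρ hρ).ne' ((h1 ρ hρ v w).trans (h2 ρ hρ v w).symm)
  obtain ⟨CE, hvv⟩ := exists_d2_d2_eq_mul_fst hη h3 hvv_ww h4
  have hww (ρ : ℝ) (hρ : 0 < ρ) (v w : ℝ) : d3 (d3 η) (ρ, v, w) = CE * ρ :=
    (hvv_ww ρ hρ v w).symm.trans (hvv ρ hρ v w)
  have hρρ (ρ : ℝ) (hρ : 0 < ρ) (v w : ℝ) : d1 (d1 η) (ρ, v, w) = CE * deriv pen ρ :=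
    mul_left_cancel₀ hρ.ne' (by rw [← h1 ρ hρ v w, hvv ρ hρ v w]; ring)
  have hρv (ρ : ℝ) (hρ : 0 < ρ) (v w : ℝ) : d2 (d1 η) (ρ, v, w) = CE * v :=
    mul_left_cancel₀ hρ.ne' (by rw [h5 ρ hρ v w, hww ρ hρ v w]; ring)
  have hρw (ρ : ℝ) (hρ : 0 < ρ) (v w : ℝ) : d3 (d1 η) (ρ, v, w) = CE * w :=
    mul_left_cancel₀ hρ.ne' (by rw [h4 ρ hρ v w, hvv ρ hρ v w]; ring)
  obtain ⟨Cρ, Cv, Cw, hd⟩ := exists_partials_eq_of_hessian (hη.of_le (by norm_num))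
    (hpen.differentiable one_ne_zero) hρρ hρv hρw hvv h3 hww
  obtain ⟨C0, hC0⟩ := exists_eq_energy_of_partials (hη.differentiable (by norm_num))
    hpen.continuous (fun ρ hρ v w => (hd ρ hρ v w).1) (fun ρ hρ v w => (hd ρ hρ v w).2.1)
    (fun ρ hρ v w => (hd ρ hρ v w).2.2)
  exact ⟨C0, Cρ, Cv, Cw, CE, hC0⟩
end

section
/- If ψ^i_U(U) = η_U(U)·f^i_U(U) holds identically for C² functions η, ψ^i, f^i on an open convex subset of ℝ^m, then the matrix η_{UU}(U)·f^i_U(U) is symmetric at every point U. -/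
/-!
Differentiating `ψ_U = η_U f_U` once more gives
`ψ_UU(a, b) = η_U (f_UU(a, b)) + η_UU(a, f_U b)`. The left side and the first term on the right
are symmetric in `(a, b)` (Schwarz), hence so is `η_UU(a, f_U b)`, and the symmetry of `η_UU`
turns this into the symmetry of `η_UU f_U`.
-/

open Filter Topology ContinuousLinearMap

section

variable {𝕜 : Type*} [NontriviallyNormedField 𝕜]
  {E : Type*} [NormedAddCommGroup E] [NormedSpace 𝕜 E]
  {F : Type*} [NormedAddCommGroup F] [NormedSpace 𝕜 F]
  {G : Type*} [NormedAddCommGroup G] [NormedSpace 𝕜 G]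

theorem fderiv_fderiv_apply_right {f : E → F} {x : E}
    (hf : DifferentiableAt 𝕜 (fderiv 𝕜 f) x) (v w : E) :
    fderiv 𝕜 (fun y => fderiv 𝕜 f y w) x v = fderiv 𝕜 (fderiv 𝕜 f) x v w := by
  simp [fderiv_clm_apply hf (differentiableAt_const w)]

theorem fderiv_fderiv_of_eventuallyEq_comp {η ψ : E → G} {f : E → E} {x : E}
    (hη : DifferentiableAt 𝕜 (fderiv 𝕜 η) x) (hf : DifferentiableAt 𝕜 (fderiv 𝕜 f) x)
    (hpair : fderiv 𝕜 ψ =ᶠ[𝓝 x] fun y => (fderiv 𝕜 η y).comp (fderiv 𝕜 f y)) (v w : E) :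
    fderiv 𝕜 (fderiv 𝕜 ψ) x v w =
      fderiv 𝕜 η x (fderiv 𝕜 (fderiv 𝕜 f) x v w) + fderiv 𝕜 (fderiv 𝕜 η) x v (fderiv 𝕜 f x w) := by
  rw [hpair.fderiv_eq, fderiv_clm_comp hη hf]
  simp

theorem IsSymmSndFDerivAt.fderiv_fderiv_apply_fderiv_comm {η ψ : E → G} {f : E → E} {x : E}
    (hη : DifferentiableAt 𝕜 (fderiv 𝕜 η) x) (hf : DifferentiableAt 𝕜 (fderiv 𝕜 f) x)
    (hpair : fderiv 𝕜 ψ =ᶠ[𝓝 x] fun y => (fderiv 𝕜 η y).comp (fderiv 𝕜 f y))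
    (hηs : IsSymmSndFDerivAt 𝕜 η x) (hψs : IsSymmSndFDerivAt 𝕜 ψ x)
    (hfs : IsSymmSndFDerivAt 𝕜 f x) (a b : E) :
    fderiv 𝕜 (fderiv 𝕜 η) x (fderiv 𝕜 f x a) b = fderiv 𝕜 (fderiv 𝕜 η) x (fderiv 𝕜 f x b) a := by
  have hab := fderiv_fderiv_of_eventuallyEq_comp hη hf hpair a b
  have hba := fderiv_fderiv_of_eventuallyEq_comp hη hf hpair b a
  rw [hψs a b, hba, hfs a b, add_right_inj] at hab
  rw [hηs, hab, hηs]

end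

theorem stmt_18_general (m : ℕ) (s : Set (Fin m → ℝ)) (hs : IsOpen s)
    (η ψ : (Fin m → ℝ) → ℝ) (f : (Fin m → ℝ) → Fin m → ℝ)
    (hη : ContDiffOn ℝ 2 η s) (hψ : ContDiffOn ℝ 2 ψ s) (hf : ContDiffOn ℝ 2 f s)
    (hpair : ∀ U ∈ s, fderiv ℝ ψ U = (fderiv ℝ η U).comp (fderiv ℝ f U)) :
    ∀ U ∈ s, ∀ a b : Fin m → ℝ,
      fderiv ℝ (fun y => fderiv ℝ η y b) U (fderiv ℝ f U a)
        = fderiv ℝ (fun y => fderiv ℝ η y a) U (fderiv ℝ f U b) := by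
  intro U hU a b
  have hUs : s ∈ 𝓝 U := hs.mem_nhds hU
  have hηU := hη.contDiffAt hUs
  have hfU := hf.contDiffAt hUs
  have hη' : DifferentiableAt ℝ (fderiv ℝ η) U :=
    (hηU.fderiv_right (m := 1) le_rfl).differentiableAt one_ne_zero
  have hf' : DifferentiableAt ℝ (fderiv ℝ f) U :=
    (hfU.fderiv_right (m := 1) le_rfl).differentiableAt one_ne_zero
  rw [fderiv_fderiv_apply_right hη', fderiv_fderiv_apply_right hη']
  exact IsSymmSndFDerivAt.fderiv_fderiv_apply_fderiv_comm hη' hf'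
    (eventually_of_mem hUs hpair) (hηU.isSymmSndFDerivAt (by simp))
    ((hψ.contDiffAt hUs).isSymmSndFDerivAt (by simp)) (hfU.isSymmSndFDerivAt (by simp)) a b

/-- If `ψ_U = η_U f_U` holds identically on an open convex set for C² functions, then the
matrix `η_{UU} f_U` is symmetric at every point: `D²η(f_U a, b) = D²η(f_U b, a)`. -/
theorem stmt_18 (m : ℕ) (s : Set (Fin m → ℝ)) (hs : IsOpen s) (hconv : Convex ℝ s)
    (η ψ : (Fin m → ℝ) → ℝ) (f : (Fin m → ℝ) → Fin m → ℝ)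
    (hη : ContDiffOn ℝ 2 η s) (hψ : ContDiffOn ℝ 2 ψ s) (hf : ContDiffOn ℝ 2 f s)
    (hpair : ∀ U ∈ s, fderiv ℝ ψ U = (fderiv ℝ η U).comp (fderiv ℝ f U)) :
    ∀ U ∈ s, ∀ a b : Fin m → ℝ,
      fderiv ℝ (fun y => fderiv ℝ η y b) U (fderiv ℝ f U a)
        = fderiv ℝ (fun y => fderiv ℝ η y a) U (fderiv ℝ f U b) :=
  stmt_18_general m s hs η ψ f hη hψ hf hpair
end
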